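/- arXiv:math/0604624 — 2 statements merged into one kernel-verified Lean document; each statement's English description precedes it below -/
import Mathlib

section
/- Under the hypotheses of the sampling theorem, suppose that the space of restrictions to Ω of all algebraic polynomials of degree at most K is contained in V_0(Ω). Then the iterative integration formula is exact on polynomials: for every polynomial p of degree at most K, with sample vector p^s = (p(x_0),…,p(x_M)) on a Δ_0-dense set X_0 with Δ_0 large enough, one has INTEGRATE[∞, p^s] := lim_{n→∞} ∫_Ω Σ_{m=0}^{n} [(I − P_0 Q_{Ψ_0,X_0})^m P_0 Q_{Ψ_0,X_0} p](x) dx = ∫_Ω p(x) dx. -/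
/-
Since `p ∈ V₀` and `P` maps into `V₀`, the iterates `eₙ₊₁ = eₙ − P Q eₙ`, `e₀ = p`, stay in `V₀`,
where the sampling hypothesis makes the iteration contract: `‖eₙ‖_∞ ≤ ηⁿ ‖p‖_∞`. As `Q` is linear,
the partial sums of the Neumann series applied to `P Q p` telescope to `p − eₙ₊₁`, so their
integrals differ from `∫_Ω p` by at most `ηⁿ⁺¹ ‖p‖_∞ |Ω| → 0`.
-/

open MeasureTheory Metric Filter

noncomputable def supNormOn {α : Type*} (Ω : Set α) (f : α → ℝ) : ℝ :=
  ⨆ x ∈ Ω, |f x|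

noncomputable def quasiInterp {α : Type*} {M : ℕ} (x : Fin (M + 1) → α)
    (ψ : Fin (M + 1) → α → ℝ) (f : α → ℝ) : α → ℝ :=
  fun t => ∑ ℓ, f (x ℓ) * ψ ℓ t

/-- `neumannTermR T g n = (I − T)ⁿ g`, the `n`-th term of the Neumann series. -/
noncomputable def neumannTermR {α : Type*} (T : (α → ℝ) → (α → ℝ)) (g : α → ℝ) :
    ℕ → (α → ℝ)
  | 0 => g
  | n + 1 => neumannTermR T g n - T (neumannTermR T g n)

open Finset

section SupNorm

variable {α : Type*} {Ω : Set α}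

lemma supNormOn_nonneg (g : α → ℝ) : 0 ≤ supNormOn Ω g :=
  Real.iSup_nonneg fun _ => Real.iSup_nonneg fun _ => abs_nonneg _

lemma abs_le_supNormOn [TopologicalSpace α] {g : α → ℝ} (hΩ : IsCompact Ω)
    (hg : ContinuousOn g Ω) {t : α} (ht : t ∈ Ω) : |g t| ≤ supNormOn Ω g := by
  obtain ⟨C, hC⟩ := hΩ.exists_bound_of_continuousOn hg
  have hbdd : BddAbove (Set.range fun y => ⨆ _ : y ∈ Ω, |g y|) := by
    refine ⟨max C 0, ?_⟩
    rintro _ ⟨y, rfl⟩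
    exact Real.iSup_le (fun hy => (hC y hy).trans (le_max_left _ _)) (le_max_right _ _)
  calc |g t| = ⨆ _ : t ∈ Ω, |g t| := (ciSup_const (hι := ⟨ht⟩)).symm
    _ ≤ supNormOn Ω g := le_ciSup hbdd t

lemma tendsto_setIntegral_zero_of_tendsto_supNormOn [TopologicalSpace α] [MeasurableSpace α]
    {μ : Measure α} [IsFiniteMeasureOnCompacts μ] {e : ℕ → α → ℝ} (hΩ : IsCompact Ω)
    (he : ∀ n, ContinuousOn (e n) Ω) (h : Tendsto (fun n => supNormOn Ω (e n)) atTop (nhds 0)) :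
    Tendsto (fun n => ∫ t in Ω, e n t ∂μ) atTop (nhds 0) := by
  have hbound : ∀ n, ‖∫ t in Ω, e n t ∂μ‖ ≤ supNormOn Ω (e n) * μ.real Ω := fun n =>
    norm_setIntegral_le_of_norm_le_const hΩ.measure_lt_top
      fun t ht => abs_le_supNormOn hΩ (he n) ht
  refine squeeze_zero_norm hbound ?_
  simpa using h.mul_const (μ.real Ω)

end SupNorm

lemma quasiInterp_sub {α : Type*} {M : ℕ} (x : Fin (M + 1) → α) (ψ : Fin (M + 1) → α → ℝ)
    (f g : α → ℝ) : quasiInterp x ψ (f - g) = quasiInterp x ψ f - quasiInterp x ψ g := by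
  funext t
  simp only [quasiInterp, Pi.sub_apply, sub_mul, sum_sub_distrib]

section Neumann

variable {α : Type*} {T : (α → ℝ) → (α → ℝ)} {g : α → ℝ} {Ω : Set α} {V : Submodule ℝ (α → ℝ)}
  {η : ℝ}

lemma neumannTermR_apply_map (hT : ∀ a b, T (a - b) = T a - T b) (m : ℕ) :
    neumannTermR T (T g) m = T (neumannTermR T g m) := by
  induction m with
  | zero => rfl
  | succ m ih => simp only [neumannTermR, ih, hT]

lemma sum_range_neumannTermR_map (hT : ∀ a b, T (a - b) = T a - T b) (n : ℕ) :
    ∑ m ∈ range n, neumannTermR T (T g) m = g - neumannTermR T g n := by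
  induction n with
  | zero => simp [neumannTermR]
  | succ n ih =>
    rw [sum_range_succ, ih, neumannTermR_apply_map hT, neumannTermR]
    abel

lemma neumannTermR_mem (hTV : ∀ h ∈ V, T h ∈ V) (hg : g ∈ V) (n : ℕ) :
    neumannTermR T g n ∈ V := by
  induction n with
  | zero => exact hg
  | succ n ih => exact V.sub_mem ih (hTV _ ih)

lemma supNormOn_neumannTermR_le (hη : 0 ≤ η) (hTV : ∀ h ∈ V, T h ∈ V)
    (hcontr : ∀ h ∈ V, supNormOn Ω (h - T h) ≤ η * supNormOn Ω h) (hg : g ∈ V) (n : ℕ) :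
    supNormOn Ω (neumannTermR T g n) ≤ η ^ n * supNormOn Ω g := by
  induction n with
  | zero => simp [neumannTermR]
  | succ n ih =>
    calc supNormOn Ω (neumannTermR T g (n + 1))
        ≤ η * supNormOn Ω (neumannTermR T g n) := hcontr _ (neumannTermR_mem hTV hg n)
      _ ≤ η * (η ^ n * supNormOn Ω g) := mul_le_mul_of_nonneg_left ih hη
      _ = η ^ (n + 1) * supNormOn Ω g := by ring

lemma tendsto_supNormOn_neumannTermR (hη0 : 0 ≤ η) (hη1 : η < 1) (hTV : ∀ h ∈ V, T h ∈ V)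
    (hcontr : ∀ h ∈ V, supNormOn Ω (h - T h) ≤ η * supNormOn Ω h) (hg : g ∈ V) :
    Tendsto (fun n => supNormOn Ω (neumannTermR T g n)) atTop (nhds 0) := by
  refine squeeze_zero (fun n => supNormOn_nonneg _)
    (supNormOn_neumannTermR_le hη0 hTV hcontr hg) ?_
  simpa using (tendsto_pow_atTop_nhds_zero_of_lt_one hη0 hη1).mul_const (supNormOn Ω g)

end Neumann

theorem stmt_13_general (d K M : ℕ) (Ω : Set (EuclideanSpace ℝ (Fin d)))
    (hΩ : IsCompact Ω)
    (V : Submodule ℝ (EuclideanSpace ℝ (Fin d) → ℝ))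
    (hVcont : ∀ g ∈ V, ContinuousOn g Ω)
    (P : (EuclideanSpace ℝ (Fin d) → ℝ) →ₗ[ℝ] (EuclideanSpace ℝ (Fin d) → ℝ))
    (hPrange : ∀ g, P g ∈ V)
    (x : Fin (M + 1) → EuclideanSpace ℝ (Fin d))
    (ψ : Fin (M + 1) → EuclideanSpace ℝ (Fin d) → ℝ)
    (η : ℝ) (hη0 : 0 < η) (hη1 : η < 1)
    (hcontr : ∀ g ∈ V,
      supNormOn Ω (g - P (quasiInterp x ψ g)) ≤ η * supNormOn Ω g)
    (hpoly : ∀ p : MvPolynomial (Fin d) ℝ, p.totalDegree ≤ K →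
      (fun t => MvPolynomial.eval (fun i => t i) p) ∈ V) :
    ∀ p : MvPolynomial (Fin d) ℝ, p.totalDegree ≤ K →
      Tendsto (fun n => ∫ t in Ω, ∑ m ∈ Finset.range (n + 1),
          neumannTermR (fun g => P (quasiInterp x ψ g))
            (P (quasiInterp x ψ (fun t => MvPolynomial.eval (fun i => t i) p))) m t)
        atTop (nhds (∫ t in Ω, MvPolynomial.eval (fun i => t i) p)) := by
  intro p hp
  set f := fun t : EuclideanSpace ℝ (Fin d) => MvPolynomial.eval (fun i => t i) p
  set T := fun g => P (quasiInterp x ψ g)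
  have hT : ∀ a b, T (a - b) = T a - T b := fun a b => by
    simp only [T, quasiInterp_sub, map_sub]
  have hTV : ∀ h ∈ V, T h ∈ V := fun h _ => hPrange _
  have hfV : f ∈ V := hpoly p hp
  have he : ∀ n, neumannTermR T f n ∈ V := neumannTermR_mem hTV hfV
  have hpartial : ∀ n, ∫ t in Ω, ∑ m ∈ range (n + 1), neumannTermR T (T f) m t
      = (∫ t in Ω, f t) - ∫ t in Ω, neumannTermR T f (n + 1) t := fun n => by
    simp_rw [← Finset.sum_apply, sum_range_neumannTermR_map hT]
    exact integral_sub ((hVcont f hfV).integrableOn_compact hΩ)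
      ((hVcont _ (he _)).integrableOn_compact hΩ)
  have hrem := tendsto_setIntegral_zero_of_tendsto_supNormOn (μ := volume) hΩ
    (fun n => hVcont _ (he n)) (tendsto_supNormOn_neumannTermR hη0.le hη1 hTV hcontr hfV)
  refine Tendsto.congr (fun n => (hpartial n).symm) ?_
  simpa using tendsto_const_nhds.sub (hrem.comp (tendsto_add_atTop_nat 1))

/-- If `𝒫_K(Ω) ⊆ V_0(Ω)`, then the iterative integration formula
is exact on every polynomial `p` of (total) degree at most `K`:
`INTEGRATE[∞, p^s] = lim_n ∫_Ω ∑_{m=0}^n (I − P_0 Q)^m P_0 Q p = ∫_Ω p`. -/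
theorem stmt_13 (d K M : ℕ) (Ω : Set (EuclideanSpace ℝ (Fin d)))
    (hΩ : IsCompact Ω) (hΩpos : 0 < volume Ω) (hΩfin : volume Ω < ⊤)
    (V : Submodule ℝ (EuclideanSpace ℝ (Fin d) → ℝ))
    (hVcont : ∀ g ∈ V, ContinuousOn g Ω)
    (P : (EuclideanSpace ℝ (Fin d) → ℝ) →ₗ[ℝ] (EuclideanSpace ℝ (Fin d) → ℝ))
    (hPrange : ∀ g, P g ∈ V)
    (hPproj : ∀ g ∈ V, P g = g)
    (Cpp : ℝ) (hCpp : 0 < Cpp)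
    (hPbd : ∀ g, supNormOn Ω (P g) ≤ Cpp * supNormOn Ω g)
    (Δ : ℝ) (hΔ : 0 < Δ) (x : Fin (M + 1) → EuclideanSpace ℝ (Fin d))
    (hxΩ : ∀ ℓ, x ℓ ∈ Ω)
    (hdense : Ω = (⋃ ℓ, Metric.ball (x ℓ) Δ⁻¹) ∩ Ω)
    (ψ : Fin (M + 1) → EuclideanSpace ℝ (Fin d) → ℝ)
    (hψ01 : ∀ ℓ, ∀ y ∈ Ω, 0 ≤ ψ ℓ y ∧ ψ ℓ y ≤ 1)
    (hψsupp : ∀ ℓ, Function.support (ψ ℓ) ⊆ Metric.ball (x ℓ) Δ⁻¹)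
    (hψsum : ∀ y ∈ Ω, ∑ ℓ, ψ ℓ y = 1)
    (η : ℝ) (hη0 : 0 < η) (hη1 : η < 1)
    (hcontr : ∀ g ∈ V,
      supNormOn Ω (g - P (quasiInterp x ψ g)) ≤ η * supNormOn Ω g)
    (hpoly : ∀ p : MvPolynomial (Fin d) ℝ, p.totalDegree ≤ K →
      (fun t => MvPolynomial.eval (fun i => t i) p) ∈ V) :
    ∀ p : MvPolynomial (Fin d) ℝ, p.totalDegree ≤ K →
      Tendsto (fun n => ∫ t in Ω, ∑ m ∈ Finset.range (n + 1),
          neumannTermR (fun g => P (quasiInterp x ψ g))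
            (P (quasiInterp x ψ (fun t => MvPolynomial.eval (fun i => t i) p))) m t)
        atTop (nhds (∫ t in Ω, MvPolynomial.eval (fun i => t i) p)) :=
  stmt_13_general d K M Ω hΩ V hVcont P hPrange x ψ η hη0 hη1 hcontr hpoly
end

section
/- Let n > 2 be an integer and h a real number with h > n − 1, and let m^{(n,h)}(ξ) = (1/2) Σ_{k=0}^{n+1} a_k^{(n,h)} e^{-ikξ} with a_k^{(n,h)} = 2^{-h}[C(n+1,k) + 4(2^{h−n} − 1)C(n−1,k−1)]. Then for all real ξ, m^{(n,h)}(ξ) = e^{-i(n+1)ξ/2} · cos(ξ/2)^{n−1} · (2^{h−n+1} − 1 + cos ξ) / 2^{h−n+1}. -/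
/-- The GP mask `a_k^{(n,h)} = 2^{-h}[C(n+1,k) + 4(2^{h−n}−1)C(n−1,k−1)]`,
with the convention `C(n−1,−1) = 0`. -/
noncomputable def gpMask (n : ℕ) (h : ℝ) (k : ℕ) : ℝ :=
  (2 : ℝ) ^ (-h) * (((n + 1).choose k : ℝ) +
    4 * ((2 : ℝ) ^ (h - (n : ℝ)) - 1) *
      (if k = 0 then 0 else ((n - 1).choose (k - 1) : ℝ)))

/-!
With `z = e^{-iξ}`, the binomial theorem turns the mask sum into
`2^{-h} (1 + z)^{n-1} ((1 + z)^2 + 4 (2^{h-n} - 1) z)`. Writing `w = e^{-iξ/2}`, one has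
`z = w^2` and `1 + z = 2 w cos(ξ/2)`, so the second factor is `4 w^2 (cos²(ξ/2) + 2^{h-n} - 1)`,
and `2 cos²(ξ/2) = 1 + cos ξ` gives the stated closed form.
-/

open Finset Complex

theorem sum_range_choose_mul_pow {R : Type*} [CommSemiring R] {n N : ℕ} (hN : n < N) (x : R) :
    ∑ k ∈ range N, (n.choose k : R) * x ^ k = (x + 1) ^ n := by
  rw [add_pow, ← sum_subset (range_subset_range.2 hN)]
  · exact sum_congr rfl fun k _ => by rw [one_pow, mul_one, mul_comm]
  · intro k _ hk
    rw [Nat.choose_eq_zero_of_lt (by simpa using hk), Nat.cast_zero, zero_mul]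

theorem sum_range_ite_choose_pred_mul_pow {R : Type*} [CommSemiring R] {n N : ℕ} (hN : n + 1 < N)
    (x : R) :
    ∑ k ∈ range N, (if k = 0 then 0 else (n.choose (k - 1) : R)) * x ^ k = x * (x + 1) ^ n := by
  obtain ⟨M, rfl⟩ : ∃ M, N = M + 1 := ⟨N - 1, by omega⟩
  rw [sum_range_succ', ← sum_range_choose_mul_pow (by omega : n < M) x, mul_sum]
  simp only [Nat.succ_ne_zero, if_false, Nat.add_sub_cancel, if_true, zero_mul, add_zero, pow_succ]
  exact sum_congr rfl fun k _ => by ring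

theorem sum_gpMask_mul_pow {n : ℕ} (hn : 1 ≤ n) (h : ℝ) (z : ℂ) :
    ∑ k ∈ range (n + 2), (gpMask n h k : ℂ) * z ^ k =
      ((2 : ℝ) ^ (-h) : ℝ) * (z + 1) ^ (n - 1) *
        ((z + 1) ^ 2 + 4 * (((2 : ℝ) ^ (h - n) : ℝ) - 1) * z) := by
  have h1 := sum_range_choose_mul_pow (by omega : n + 1 < n + 2) z
  have h2 := sum_range_ite_choose_pred_mul_pow (by omega : n - 1 + 1 < n + 2) z
  have hsplit : (z + 1) ^ (n + 1) = (z + 1) ^ (n - 1) * (z + 1) ^ 2 := by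
    rw [← pow_add]; congr 1; omega
  simp only [gpMask, ofReal_mul, ofReal_add, ofReal_natCast, apply_ite ofReal, ofReal_zero,
    ofReal_sub, ofReal_one, ofReal_ofNat]
  simp only [add_mul, mul_assoc, sum_add_distrib, ← mul_sum, h1, h2, hsplit]
  ring

theorem exp_neg_mul_I_add_one (ξ : ℝ) :
    exp (-ξ * I) + 1 = 2 * exp (-ξ / 2 * I) * (Real.cos (ξ / 2) : ℂ) := by
  rw [ofReal_cos, cos]
  calc exp (-ξ * I) + 1 = exp (-ξ / 2 * I) * (exp (ξ / 2 * I) + exp (-(ξ / 2) * I)) := by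
        rw [mul_add, ← exp_add, ← exp_add]
        ring_nf
        rw [exp_zero, add_comm]
    _ = _ := by push_cast; ring

theorem two_rpow_neg (h : ℝ) (n : ℕ) : (2 : ℝ) ^ (-h) = ((2 : ℝ) ^ (h - n) * 2 ^ n)⁻¹ := by
  rw [← Real.rpow_natCast, ← Real.rpow_add two_pos, sub_add_cancel, Real.rpow_neg zero_le_two]

theorem stmt_18_general (n : ℕ) (hn : 2 < n) (h : ℝ) :
    ∀ ξ : ℝ,
      (1 / 2 : ℂ) * ∑ k ∈ Finset.range (n + 2),
          (gpMask n h k : ℂ) * Complex.exp (-(k : ℂ) * Complex.I * (ξ : ℂ)) =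
        Complex.exp (-Complex.I * ((n : ℂ) + 1) * (ξ : ℂ) / 2) *
          ((Real.cos (ξ / 2) : ℝ) : ℂ) ^ (n - 1) *
          ((((2 : ℝ) ^ (h - (n : ℝ) + 1) - 1 + Real.cos ξ : ℝ)) : ℂ) /
          ((((2 : ℝ) ^ (h - (n : ℝ) + 1) : ℝ)) : ℂ) := by
  intro ξ
  have hw2 : exp (-ξ / 2 * I) ^ 2 = exp (-ξ * I) := by rw [← exp_nat_mul]; ring_nf
  have hz (k : ℕ) : exp (-(k : ℂ) * I * ξ) = exp (-ξ * I) ^ k := by rw [← exp_nat_mul]; ring_nf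
  have hphase : exp (-I * ((n : ℂ) + 1) * ξ / 2) = exp (-ξ / 2 * I) ^ (n + 1) := by
    rw [← exp_nat_mul]; push_cast; ring_nf
  have hcos : Real.cos ξ = 2 * Real.cos (ξ / 2) ^ 2 - 1 := by
    rw [← Real.cos_two_mul, mul_div_cancel₀ _ two_ne_zero]
  obtain ⟨m, rfl⟩ : ∃ m, n = m + 1 := ⟨n - 1, by omega⟩
  simp_rw [hz]
  rw [sum_gpMask_mul_pow (by omega), exp_neg_mul_I_add_one, ← hw2, hphase, hcos,
    Real.rpow_add_one two_ne_zero, two_rpow_neg h (m + 1)]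
  have hA : (2 : ℝ) ^ (h - ((m + 1 : ℕ) : ℝ)) ≠ 0 := (Real.rpow_pos_of_pos two_pos _).ne'
  generalize (2 : ℝ) ^ (h - ((m + 1 : ℕ) : ℝ)) = A at hA ⊢
  generalize Real.cos (ξ / 2) = c
  generalize exp (-ξ / 2 * I) = w
  push_cast
  field_simp
  ring

/-- Explicit form of the GP trigonometric symbol:
`m^{(n,h)}(ξ) = e^{-i(n+1)ξ/2} cos(ξ/2)^{n−1} (2^{h−n+1} − 1 + cos ξ)/2^{h−n+1}`. -/
theorem stmt_18 (n : ℕ) (hn : 2 < n) (h : ℝ) (hh : (n : ℝ) - 1 < h) :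
    ∀ ξ : ℝ,
      (1 / 2 : ℂ) * ∑ k ∈ Finset.range (n + 2),
          (gpMask n h k : ℂ) * Complex.exp (-(k : ℂ) * Complex.I * (ξ : ℂ)) =
        Complex.exp (-Complex.I * ((n : ℂ) + 1) * (ξ : ℂ) / 2) *
          ((Real.cos (ξ / 2) : ℝ) : ℂ) ^ (n - 1) *
          ((((2 : ℝ) ^ (h - (n : ℝ) + 1) - 1 + Real.cos ξ : ℝ)) : ℂ) /
          ((((2 : ℝ) ^ (h - (n : ℝ) + 1) : ℝ)) : ℂ) :=
  stmt_18_general n hn h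
end
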